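/- For real c ≥ 1 and real k, the symbol difference satisfies |e^{iξ(c²−c√(c²+k²))} − e^{−iξ k²/2}| ≤ |ξ| · k⁴/(8c²) for all real ξ. -/

import Mathlib

open Complex

theorem Complex.norm_exp_I_mul_ofReal_sub_exp_I_mul_ofReal_le (x y : ℝ) :
    ‖exp (I * x) - exp (I * y)‖ ≤ |x - y| := by
  have hfactor : exp (I * x) - exp (I * y) = exp (I * y) * (exp (I * ↑(x - y)) - 1) := by
    rw [mul_sub, ← exp_add, mul_one]
    push_cast
    ring_nf
  rw [hfactor, norm_mul, norm_exp_I_mul_ofReal, one_mul]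
  exact Real.norm_exp_I_mul_ofReal_sub_one_le

-- With `s = √(c² + k²)`, the remainder of `√(1 + x) ≈ 1 + x/2` is a perfect square.
theorem sq_add_half_sq_sub_mul_sqrt_eq (c k : ℝ) :
    c ^ 2 + k ^ 2 / 2 - c * √(c ^ 2 + k ^ 2) = (√(c ^ 2 + k ^ 2) - c) ^ 2 / 2 := by
  have hs : √(c ^ 2 + k ^ 2) ^ 2 = c ^ 2 + k ^ 2 := Real.sq_sqrt (by positivity)
  linear_combination -hs / 2

theorem sqrt_sq_add_sq_sub_le {c : ℝ} (hc : 0 < c) (k : ℝ) :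
    √(c ^ 2 + k ^ 2) - c ≤ k ^ 2 / (2 * c) := by
  have hs : √(c ^ 2 + k ^ 2) ^ 2 = c ^ 2 + k ^ 2 := Real.sq_sqrt (by positivity)
  have hcs : c ≤ √(c ^ 2 + k ^ 2) := Real.le_sqrt_of_sq_le (by nlinarith)
  rw [le_div_iff₀ (by positivity)]
  nlinarith

theorem abs_sq_sub_mul_sqrt_add_half_sq_le {c : ℝ} (hc : 0 < c) (k : ℝ) :
    |c ^ 2 - c * √(c ^ 2 + k ^ 2) + k ^ 2 / 2| ≤ k ^ 4 / (8 * c ^ 2) := by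
  have hcs : c ≤ √(c ^ 2 + k ^ 2) := Real.le_sqrt_of_sq_le (by nlinarith)
  have hgap : √(c ^ 2 + k ^ 2) - c ≤ k ^ 2 / (2 * c) := sqrt_sq_add_sq_sub_le hc k
  calc |c ^ 2 - c * √(c ^ 2 + k ^ 2) + k ^ 2 / 2|
      = |(√(c ^ 2 + k ^ 2) - c) ^ 2 / 2| := by
        rw [← sq_add_half_sq_sub_mul_sqrt_eq, add_sub_right_comm]
    _ = (√(c ^ 2 + k ^ 2) - c) ^ 2 / 2 := abs_of_nonneg (by positivity)
    _ ≤ (k ^ 2 / (2 * c)) ^ 2 / 2 := by gcongr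
    _ = k ^ 4 / (8 * c ^ 2) := by ring

/-- Refined symbol expansion: for `c ≥ 1` and real `k`,
`|e^{iξ(c²−c√(c²+k²))} − e^{−iξk²/2}| ≤ |ξ|·k⁴/(8c²)` for all real `ξ`. -/
theorem symbol_exp_refined_bound (c k ξ : ℝ) (hc : 1 ≤ c) :
    ‖Complex.exp (Complex.I * ξ * (c ^ 2 - c * Real.sqrt (c ^ 2 + k ^ 2))) -
          Complex.exp (-Complex.I * ξ * (k ^ 2 / 2))‖ ≤
      |ξ| * k ^ 4 / (8 * c ^ 2) := by
  set s := √(c ^ 2 + k ^ 2)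
  have hphase₁ : I * ξ * ((c : ℂ) ^ 2 - c * s) = I * ((ξ * (c ^ 2 - c * s) : ℝ) : ℂ) := by
    push_cast; ring
  have hphase₂ : -I * ξ * ((k : ℂ) ^ 2 / 2) = I * ((-(ξ * (k ^ 2 / 2)) : ℝ) : ℂ) := by
    push_cast; ring
  rw [hphase₁, hphase₂]
  calc _ ≤ |ξ * (c ^ 2 - c * s) - -(ξ * (k ^ 2 / 2))| :=
        norm_exp_I_mul_ofReal_sub_exp_I_mul_ofReal_le _ _
    _ = |ξ| * |c ^ 2 - c * s + k ^ 2 / 2| := by rw [← abs_mul]; ring_nf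
    _ ≤ |ξ| * (k ^ 4 / (8 * c ^ 2)) := by
        gcongr; exact abs_sq_sub_mul_sqrt_add_half_sq_le (by linarith) k
    _ = |ξ| * k ^ 4 / (8 * c ^ 2) := by ring
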